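/- arXiv:2011.03385 — 6 statements merged into one kernel-verified Lean document; each statement's English description precedes it below -/
import Mathlib

section
/- Let U₁,…,U_N be finite nonempty sets, y a fixed parameter, and r a real-valued function of (y, u₁,…,u_N). Define λ_i(r) = sup over y and over u_k for k ≠ i of [sup_{u_i} r(y,u) − inf_{u_i} r(y,u)]. For probability distributions δ_i, ξ_i on U_i, define R(y, δ₁,…,δ_N) = ∑_{u₁,…,u_N} r(y,u) ∏_i δ_i(u_i). Then |R(y, δ) − R(y, ξ)| ≤ ∑_{i=1}^N (λ_i(r)/2) · ‖δ_i − ξ_i‖₁. -/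
open Finset

/-- Centering trick: if `μ` sums to zero then `|∑ f·μ| ≤ (osc f / 2) · ∑|μ|`. -/
lemma center_bound {S : Type*} [Fintype S] [Nonempty S] (f μ : S → ℝ)
    (hμ : ∑ v, μ v = 0) :
    |∑ v, f v * μ v| ≤
      ((univ.sup' univ_nonempty f - univ.inf' univ_nonempty f) / 2) * ∑ v, |μ v| := by
  set M := univ.sup' univ_nonempty f with hM
  set m := univ.inf' univ_nonempty f with hm
  have h1 : ∑ v, f v * μ v = ∑ v, (f v - (M + m) / 2) * μ v := by
    simp [sub_mul, Finset.sum_sub_distrib, ← Finset.mul_sum, hμ]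
  rw [h1]
  calc |∑ v, (f v - (M + m) / 2) * μ v| ≤ ∑ v, |(f v - (M + m) / 2) * μ v| :=
        Finset.abs_sum_le_sum_abs _ _
    _ ≤ ∑ v, ((M - m) / 2) * |μ v| := by
        refine Finset.sum_le_sum fun v _ => ?_
        rw [abs_mul]
        refine mul_le_mul_of_nonneg_right ?_ (abs_nonneg _)
        have h2 : f v ≤ M := Finset.le_sup' f (mem_univ v)
        have h3 : m ≤ f v := Finset.inf'_le f (mem_univ v)
        rw [abs_le]; constructor <;> linarith
    _ = _ := by rw [← Finset.mul_sum]

lemma prod_sub_prod_single {ι : Type*} [Fintype ι] [DecidableEq ι]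
    (a b : ι → ℝ) (j : ι) (h : ∀ i, i ≠ j → a i = b i) :
    ∏ i, a i - ∏ i, b i = (a j - b j) * ∏ i ∈ univ.erase j, a i := by
  have hb : ∏ i ∈ univ.erase j, b i = ∏ i ∈ univ.erase j, a i :=
    Finset.prod_congr rfl fun i hi => (h i (Finset.mem_erase.mp hi).1).symm
  rw [← Finset.mul_prod_erase univ a (mem_univ j),
      ← Finset.mul_prod_erase univ b (mem_univ j), hb]
  ring

/-- One hybrid step bound. -/
lemma step_bound {N : ℕ} {Y : Type*}
    {U : Fin N → Type*} [∀ i, Fintype (U i)] [∀ i, Nonempty (U i)]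
    (r : Y → (∀ i, U i) → ℝ) (y : Y) (j : Fin N)
    (a : ∀ i, U i → ℝ) (ha0 : ∀ i v, 0 ≤ a i v) (ha1 : ∀ i, ∑ v, a i v = 1)
    (μ : U j → ℝ) (hμ : ∑ v, μ v = 0) (L : ℝ)
    (hL : ∀ u : ∀ i, U i,
      (univ.sup' univ_nonempty fun v : U j => r y (Function.update u j v))
        - (univ.inf' univ_nonempty fun v : U j => r y (Function.update u j v)) ≤ L) :
    |∑ u : ∀ i, U i, r y u * (μ (u j) * ∏ i ∈ univ.erase j, a i (u i))|
      ≤ (L / 2) * ∑ v, |μ v| := by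
  classical
  set E := Equiv.piSplitAt j U with hE
  have hEj : ∀ (v : U j) w, E.symm (v, w) j = v := by
    intro v w; simp [hE]
  have hEapp : ∀ (v : U j) w (i : Fin N) (hi : i ≠ j), E.symm (v, w) i = w ⟨i, hi⟩ := by
    intro v w i hi; simp [hE, hi]
  have hupdate : ∀ (v v' : U j) w,
      E.symm (v, w) = Function.update (E.symm (v', w)) j v := by
    intro v v' w
    funext i
    by_cases hi : i = j
    · subst hi; rw [hEj, Function.update_self]
    · rw [Function.update_of_ne hi, hEapp _ _ _ hi, hEapp _ _ _ hi]
  set W : (∀ k : {k // k ≠ j}, U k) → ℝ := fun w => ∏ k : {k // k ≠ j}, a k.1 (w k)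
    with hW
  have hsum : (∑ u : ∀ i, U i, r y u * (μ (u j) * ∏ i ∈ univ.erase j, a i (u i)))
      = ∑ w, W w * ∑ v, r y (E.symm (v, w)) * μ v := by
    rw [← Equiv.sum_comp E.symm
      (fun u => r y u * (μ (u j) * ∏ i ∈ univ.erase j, a i (u i)))]
    rw [Fintype.sum_prod_type, Finset.sum_comm]
    refine Finset.sum_congr rfl fun w _ => ?_
    rw [Finset.mul_sum]
    refine Finset.sum_congr rfl fun v _ => ?_
    have hprod : ∏ i ∈ univ.erase j, a i (E.symm (v, w) i) = W w := by
      rw [hW, Finset.prod_subtype (p := fun i => i ≠ j) (univ.erase j)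
        (fun i => by simp) (fun i => a i (E.symm (v, w) i))]
      exact Finset.prod_congr rfl fun k _ => by rw [hEapp _ _ _ k.2]
    rw [hEj, hprod]; ring
  rw [hsum]
  have hWnn : ∀ w, 0 ≤ W w := fun w => Finset.prod_nonneg fun k _ => ha0 _ _
  have hWsum : ∑ w, W w = 1 := by
    rw [hW]
    calc ∑ w : ∀ k : {k // k ≠ j}, U k, ∏ k, a k.1 (w k)
        = ∑ w ∈ Fintype.piFinset (fun _ : {k // k ≠ j} => (univ : Finset _)),
            ∏ k, a k.1 (w k) := by rw [Fintype.piFinset_univ]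
      _ = ∏ k : {k // k ≠ j}, ∑ v, a k.1 v := (Finset.prod_univ_sum _ _).symm
      _ = 1 := by simp [ha1]
  calc |∑ w, W w * ∑ v, r y (E.symm (v, w)) * μ v|
      ≤ ∑ w, |W w * ∑ v, r y (E.symm (v, w)) * μ v| := Finset.abs_sum_le_sum_abs _ _
    _ ≤ ∑ w, W w * ((L / 2) * ∑ v, |μ v|) := by
        refine Finset.sum_le_sum fun w _ => ?_
        rw [abs_mul, abs_of_nonneg (hWnn w)]
        refine mul_le_mul_of_nonneg_left ?_ (hWnn w)
        set u₀ := E.symm (Classical.arbitrary (U j), w) with hu₀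
        have hf : ∀ v, r y (E.symm (v, w)) = r y (Function.update u₀ j v) := by
          intro v; rw [hupdate v (Classical.arbitrary (U j)) w]
        have hrw : (∑ v, r y (E.symm (v, w)) * μ v)
            = ∑ v, r y (Function.update u₀ j v) * μ v :=
          Finset.sum_congr rfl fun v _ => by rw [hf]
        rw [hrw]
        refine (center_bound (fun v => r y (Function.update u₀ j v)) μ hμ).trans ?_
        have hSnn : (0:ℝ) ≤ ∑ v, |μ v| := Finset.sum_nonneg fun v _ => abs_nonneg _
        have := hL u₀
        gcongr
    _ = (L / 2) * ∑ v, |μ v| := by rw [← Finset.sum_mul, hWsum, one_mul]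

/-- multilinear extension `R(y,δ) = ∑_u r(y,u) ∏ δ_i(u_i)` satisfies
`|R(y,δ) - R(y,ξ)| ≤ ∑_i (λ_i(r)/2) ‖δ_i - ξ_i‖₁`, where `λ_i(r)` is the local
oscillation of `r` in the `i`-th action coordinate (sup over `y` and `u^{-i}` of
`sup_{u_i} r - inf_{u_i} r`). -/
theorem stmt_1 {N : ℕ} {Y : Type*} [Fintype Y] [Nonempty Y]
    {U : Fin N → Type*} [∀ i, Fintype (U i)] [∀ i, Nonempty (U i)]
    (r : Y → (∀ i, U i) → ℝ)
    (lam : Fin N → ℝ)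
    (hlam : ∀ i, lam i =
      Finset.univ.sup' Finset.univ_nonempty
        (fun p : Y × (∀ k, U k) =>
          Finset.univ.sup' Finset.univ_nonempty
              (fun v : U i => r p.1 (Function.update p.2 i v))
            - Finset.univ.inf' Finset.univ_nonempty
              (fun v : U i => r p.1 (Function.update p.2 i v))))
    (δ ξ : ∀ i, U i → ℝ)
    (hδ : ∀ i, (∀ v, 0 ≤ δ i v) ∧ ∑ v, δ i v = 1)
    (hξ : ∀ i, (∀ v, 0 ≤ ξ i v) ∧ ∑ v, ξ i v = 1)
    (y : Y) :
    |(∑ u : ∀ i, U i, r y u * ∏ i, δ i (u i))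
      - ∑ u : ∀ i, U i, r y u * ∏ i, ξ i (u i)|
      ≤ ∑ i, (lam i / 2) * ∑ v, |δ i v - ξ i v| := by
  classical
  set P : ℕ → ℝ := fun t =>
    ∑ u : ∀ i, U i, r y u * ∏ i : Fin N, (if i.1 < t then ξ i (u i) else δ i (u i))
    with hP
  have hP0 : P 0 = ∑ u : ∀ i, U i, r y u * ∏ i, δ i (u i) := by
    simp [hP]
  have hPN : P N = ∑ u : ∀ i, U i, r y u * ∏ i, ξ i (u i) := by
    simp [hP, Fin.is_lt]
  have htel : P 0 - P N = ∑ i : Fin N, (P i.val - P (i.val + 1)) := by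
    rw [Fin.sum_univ_eq_sum_range (fun t => P t - P (t + 1)) N,
      Finset.sum_range_sub' P N]
  have key : ∀ j : Fin N,
      |P j.val - P (j.val + 1)| ≤ (lam j / 2) * ∑ v, |δ j v - ξ j v| := by
    intro j
    set a : ∀ i, U i → ℝ := fun i v => if i.1 < j.1 then ξ i v else δ i v
      with ha
    have hdiff : P j.val - P (j.val + 1)
        = ∑ u : ∀ i, U i, r y u *
            ((δ j (u j) - ξ j (u j)) * ∏ i ∈ univ.erase j, a i (u i)) := by
      rw [hP]
      rw [← Finset.sum_sub_distrib]
      refine Finset.sum_congr rfl fun u _ => ?_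
      rw [← mul_sub, prod_sub_prod_single
        (fun i : Fin N => if i.1 < j.1 then ξ i (u i) else δ i (u i))
        (fun i : Fin N => if i.1 < j.1 + 1 then ξ i (u i) else δ i (u i)) j
        (fun i hi => by
          have hne : i.1 ≠ j.1 := fun h => hi (Fin.val_injective h)
          have hiff : (i.1 < j.1) = (i.1 < j.1 + 1) := by
            simp only [eq_iff_iff]; omega
          simp only [hiff])]
      simp [ha, Nat.lt_succ_self]
    rw [hdiff]
    refine step_bound r y j a
      (fun i v => by
        simp only [ha]
        by_cases h : i.1 < j.1
        · rw [if_pos h]; exact (hξ i).1 v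
        · rw [if_neg h]; exact (hδ i).1 v)
      (fun i => by
        by_cases h : i.1 < j.1
        · simp only [ha, if_pos h]; exact (hξ i).2
        · simp only [ha, if_neg h]; exact (hδ i).2)
      (fun v => δ j v - ξ j v)
      (by rw [Finset.sum_sub_distrib, (hδ j).2, (hξ j).2, sub_self])
      (lam j)
      (fun u => by
        rw [hlam j]
        exact Finset.le_sup'
          (f := fun p : Y × (∀ k, U k) =>
            Finset.univ.sup' Finset.univ_nonempty
                (fun v : U j => r p.1 (Function.update p.2 j v))
              - Finset.univ.inf' Finset.univ_nonempty
                (fun v : U j => r p.1 (Function.update p.2 j v)))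
          (mem_univ (y, u)))
  calc |(∑ u : ∀ i, U i, r y u * ∏ i, δ i (u i))
      - ∑ u : ∀ i, U i, r y u * ∏ i, ξ i (u i)|
      = |∑ i : Fin N, (P i.val - P (i.val + 1))| := by rw [← htel, hP0, hPN]
    _ ≤ ∑ i : Fin N, |P i.val - P (i.val + 1)| := Finset.abs_sum_le_sum_abs _ _
    _ ≤ ∑ i, (lam i / 2) * ∑ v, |δ i v - ξ i v| :=
        Finset.sum_le_sum fun i _ => key i
end

section
/- Let Δ be the probability simplex on a finite nonempty set U. The negative entropy function Ω(δ) = ∑_{u∈U} δ(u) ln δ(u) (with 0 ln 0 = 0) is 1-strongly convex on Δ with respect to the ℓ¹-norm; that is, for all δ, ξ ∈ Δ and t ∈ [0,1], Ω(tδ + (1−t)ξ) ≤ tΩ(δ) + (1−t)Ω(ξ) − (t(1−t)/2)‖δ − ξ‖₁². -/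
/-!
Let `m = tδ + (1-t)ξ` and `klFun x = x log x + 1 - x`. Coordinatewise one finds
`tΩ(δ) + (1-t)Ω(ξ) - Ω(m) = t KL(δ‖m) + (1-t) KL(ξ‖m)`, where `KL(p‖q) = ∑ q klFun (p/q)`.
Since `‖δ - m‖₁ = (1-t)‖δ - ξ‖₁` and `‖ξ - m‖₁ = t‖δ - ξ‖₁`, Pinsker's inequality
`‖p - q‖₁² ≤ 2 KL(p‖q)` bounds the gap below by `t(1-t)((1-t) + t)‖δ - ξ‖₁² / 2`.
Pinsker's inequality is Cauchy–Schwarz applied to the pointwise bound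
`3(p - q)² ≤ 2(p + 2q) · q klFun (p/q)`.
-/

open Real Set InformationTheory

theorem isMinOn_of_hasDerivAt_sign {f f' : ℝ → ℝ} {a c : ℝ} (hac : a < c)
    (hf : ∀ x ∈ Ioi a, HasDerivAt f (f' x) x)
    (hle : ∀ x ∈ Ioo a c, f' x ≤ 0) (hge : ∀ x ∈ Ioi c, 0 ≤ f' x) :
    IsMinOn f (Ioi a) c := by
  have hcont : ContinuousOn f (Ioi a) := fun x hx => (hf x hx).continuousAt.continuousWithinAt
  intro x hx
  rcases le_total x c with hxc | hcx
  · have hanti : AntitoneOn f (Ioc a c) := by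
      refine antitoneOn_of_hasDerivWithinAt_nonpos (f' := f') (convex_Ioc a c)
        (hcont.mono Ioc_subset_Ioi_self) (fun y hy => ?_) (fun y hy => ?_)
      · rw [interior_Ioc] at hy
        exact (hf y hy.1).hasDerivWithinAt
      · rw [interior_Ioc] at hy
        exact hle y hy
    exact hanti ⟨hx, hxc⟩ ⟨hac, le_rfl⟩ hxc
  · have hmono : MonotoneOn f (Ici c) := by
      refine monotoneOn_of_hasDerivWithinAt_nonneg (f' := f') (convex_Ici c)
        (hcont.mono (Ici_subset_Ioi.2 hac)) (fun y hy => ?_) (fun y hy => ?_)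
      · rw [interior_Ici] at hy
        exact (hf y (hac.trans hy)).hasDerivWithinAt
      · rw [interior_Ici] at hy
        exact hge y hy
    exact hmono self_mem_Ici hcx hcx

theorem monotoneOn_add_one_mul_log_sub :
    MonotoneOn (fun x : ℝ => (x + 1) * log x - 2 * (x - 1)) (Ioi 0) := by
  refine monotoneOn_of_hasDerivWithinAt_nonneg (f' := fun x => log x + x⁻¹ - 1) (convex_Ioi 0)
    (fun x hx => ?_) (fun x hx => ?_) (fun x hx => ?_)
  · fun_prop (disch := exact ne_of_gt hx)
  · rw [interior_Ioi] at hx ⊢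
    have h : HasDerivAt (fun y => (y + 1) * log y - 2 * (y - 1))
        (1 * log x + (x + 1) * x⁻¹ - 2 * 1) x :=
      (((hasDerivAt_id x).add_const 1).mul (hasDerivAt_log (ne_of_gt hx))).sub
        (((hasDerivAt_id x).sub_const 1).const_mul 2)
    refine (h.congr_deriv ?_).hasDerivWithinAt
    field_simp [(mem_Ioi.1 hx).ne']
    ring
  · rw [interior_Ioi] at hx
    linarith [one_sub_inv_le_log_of_pos hx]

/-- The derivative of `2(x+2) klFun x - 3(x-1)²` is `4((x+1) log x - 2(x-1))`, an increasing
function vanishing at `x = 1`. -/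
theorem three_mul_sq_sub_one_le_klFun {x : ℝ} (hx : 0 ≤ x) :
    3 * (x - 1) ^ 2 ≤ 2 * (x + 2) * klFun x := by
  rcases hx.eq_or_lt with rfl | hx
  · norm_num [klFun_zero]
  set φ : ℝ → ℝ := fun x => 2 * (x + 2) * klFun x - 3 * (x - 1) ^ 2
  set ψ : ℝ → ℝ := fun x => (x + 1) * log x - 2 * (x - 1)
  have hφ' : ∀ y ∈ Ioi (0 : ℝ), HasDerivAt φ (4 * ψ y) y := by
    intro y hy
    have h : HasDerivAt φ (2 * 1 * klFun y + 2 * (y + 2) * log y - 3 * (2 * (y - 1) ^ 1 * 1)) y :=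
      ((((hasDerivAt_id y).add_const 2).const_mul 2).mul (hasDerivAt_klFun (ne_of_gt hy))).sub
        ((((hasDerivAt_id y).sub_const 1).pow 2).const_mul 3)
    refine h.congr_deriv ?_
    simp only [ψ, klFun_apply]
    ring
  have hψ1 : ψ 1 = 0 := by simp [ψ]
  have hmin := isMinOn_of_hasDerivAt_sign one_pos hφ'
    (fun y hy => by
      have := monotoneOn_add_one_mul_log_sub hy.1 (mem_Ioi.2 one_pos) hy.2.le
      linarith)
    (fun y hy => by
      have := monotoneOn_add_one_mul_log_sub (mem_Ioi.2 one_pos) (mem_Ioi.2 (one_pos.trans hy))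
        hy.le
      linarith)
  have := hmin (mem_Ioi.2 hx)
  simp only [mem_ofPred_eq, φ, klFun_one] at this
  linarith

theorem three_mul_sq_sub_le_mul_klFun_div {p q : ℝ} (hp : 0 ≤ p) (hq : 0 ≤ q)
    (hpq : q = 0 → p = 0) :
    3 * (p - q) ^ 2 ≤ 2 * (p + 2 * q) * (q * klFun (p / q)) := by
  rcases hq.eq_or_lt with rfl | hq
  · simp [hpq rfl]
  calc 3 * (p - q) ^ 2 = q ^ 2 * (3 * (p / q - 1) ^ 2) := by field_simp
    _ ≤ q ^ 2 * (2 * (p / q + 2) * klFun (p / q)) := by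
      gcongr _ * ?_
      exact three_mul_sq_sub_one_le_klFun (div_nonneg hp hq.le)
    _ = 2 * (p + 2 * q) * (q * klFun (p / q)) := by field_simp

theorem mul_klFun_div {p q : ℝ} (hpq : q = 0 → p = 0) :
    q * klFun (p / q) = p * log p - p * log q + q - p := by
  rcases eq_or_ne q 0 with rfl | hq
  · simp [hpq rfl]
  rcases eq_or_ne p 0 with rfl | hp
  · simp [klFun_zero]
  rw [klFun_apply, log_div hp hq]
  field_simp

theorem sq_sum_abs_sub_le_two_mul_sum_mul_klFun {ι : Type*} [Fintype ι] {p q : ι → ℝ}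
    (hp0 : ∀ i, 0 ≤ p i) (hq0 : ∀ i, 0 ≤ q i) (hp1 : ∑ i, p i = 1) (hq1 : ∑ i, q i = 1)
    (hpq : ∀ i, q i = 0 → p i = 0) :
    (∑ i, |p i - q i|) ^ 2 ≤ 2 * ∑ i, q i * klFun (p i / q i) := by
  have h := Finset.sum_sq_le_sum_mul_sum_of_sq_le_mul Finset.univ
    (r := fun i => |p i - q i|) (f := fun i => 2 / 3 * (p i + 2 * q i))
    (fun i _ => by have := hp0 i; have := hq0 i; positivity)
    (fun i _ => mul_nonneg (hq0 i) (klFun_nonneg (div_nonneg (hp0 i) (hq0 i))))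
    (fun i _ => by
      have := three_mul_sq_sub_le_mul_klFun_div (hp0 i) (hq0 i) (hpq i)
      rw [sq_abs]
      linarith)
  rwa [← Finset.mul_sum, Finset.sum_add_distrib, ← Finset.mul_sum, hp1, hq1,
    show (2 / 3 * (1 + 2 * 1) : ℝ) = 2 by norm_num] at h

section Mixture

variable {t a b : ℝ}

theorem eq_zero_left_of_mixture_eq_zero (ht0 : 0 < t) (ht1 : t ≤ 1) (ha : 0 ≤ a) (hb : 0 ≤ b)
    (h : t * a + (1 - t) * b = 0) : a = 0 :=
  (mul_eq_zero.1 ((add_eq_zero_iff_of_nonneg (mul_nonneg ht0.le ha)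
    (mul_nonneg (sub_nonneg.2 ht1) hb)).1 h).1).resolve_left ht0.ne'

theorem eq_zero_right_of_mixture_eq_zero (ht0 : 0 ≤ t) (ht1 : t < 1) (ha : 0 ≤ a) (hb : 0 ≤ b)
    (h : t * a + (1 - t) * b = 0) : b = 0 :=
  (mul_eq_zero.1 ((add_eq_zero_iff_of_nonneg (mul_nonneg ht0 ha)
    (mul_nonneg (sub_nonneg.2 ht1.le) hb)).1 h).2).resolve_left (sub_ne_zero.2 ht1.ne')

theorem mul_log_mixture_gap (ht0 : 0 < t) (ht1 : t < 1) (ha : 0 ≤ a) (hb : 0 ≤ b) :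
    t * (a * log a) + (1 - t) * (b * log b)
        - (t * a + (1 - t) * b) * log (t * a + (1 - t) * b)
      = t * ((t * a + (1 - t) * b) * klFun (a / (t * a + (1 - t) * b)))
        + (1 - t) * ((t * a + (1 - t) * b) * klFun (b / (t * a + (1 - t) * b))) := by
  rw [mul_klFun_div (eq_zero_left_of_mixture_eq_zero ht0 ht1.le ha hb),
    mul_klFun_div (eq_zero_right_of_mixture_eq_zero ht0.le ht1 ha hb)]
  ring

end Mixture

section Fintype

variable {ι : Type*} [Fintype ι] {p q : ι → ℝ} {t : ℝ}

theorem sum_abs_sub_mixture_left (ht1 : t ≤ 1) :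
    ∑ i, |p i - (t * p i + (1 - t) * q i)| = (1 - t) * ∑ i, |p i - q i| := by
  rw [Finset.mul_sum]
  refine Finset.sum_congr rfl fun i _ => ?_
  rw [show p i - (t * p i + (1 - t) * q i) = (1 - t) * (p i - q i) by ring, abs_mul,
    abs_of_nonneg (sub_nonneg.2 ht1)]

theorem sum_abs_sub_mixture_right (ht0 : 0 ≤ t) :
    ∑ i, |q i - (t * p i + (1 - t) * q i)| = t * ∑ i, |p i - q i| := by
  rw [Finset.mul_sum]
  refine Finset.sum_congr rfl fun i _ => ?_
  rw [show q i - (t * p i + (1 - t) * q i) = -(t * (p i - q i)) by ring, abs_neg, abs_mul,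
    abs_of_nonneg ht0]

end Fintype

theorem stmt_4_general {U : Type*} [Fintype U]
    (Ω : (U → ℝ) → ℝ) (hΩ : ∀ δ, Ω δ = ∑ u, δ u * Real.log (δ u))
    (δ ξ : U → ℝ)
    (hδ0 : ∀ u, 0 ≤ δ u) (hδ1 : ∑ u, δ u = 1)
    (hξ0 : ∀ u, 0 ≤ ξ u) (hξ1 : ∑ u, ξ u = 1)
    (t : ℝ) (ht0 : 0 ≤ t) (ht1 : t ≤ 1) :
    Ω (fun u => t * δ u + (1 - t) * ξ u)
      ≤ t * Ω δ + (1 - t) * Ω ξ - (t * (1 - t) / 2) * (∑ u, |δ u - ξ u|) ^ 2 := by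
  rcases ht0.eq_or_lt with rfl | ht0
  · simp
  rcases ht1.eq_or_lt with rfl | ht1
  · simp
  set m : U → ℝ := fun u => t * δ u + (1 - t) * ξ u
  have hm0 (u : U) : 0 ≤ m u :=
    add_nonneg (mul_nonneg ht0.le (hδ0 u)) (mul_nonneg (sub_nonneg.2 ht1.le) (hξ0 u))
  have hm1 : ∑ u, m u = 1 := by
    simp only [m, Finset.sum_add_distrib, ← Finset.mul_sum, hδ1, hξ1]
    ring
  have hgap : t * Ω δ + (1 - t) * Ω ξ - Ω m
      = t * ∑ u, m u * klFun (δ u / m u) + (1 - t) * ∑ u, m u * klFun (ξ u / m u) := by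
    simp only [hΩ, Finset.mul_sum, ← Finset.sum_sub_distrib, ← Finset.sum_add_distrib]
    exact Finset.sum_congr rfl fun u _ => mul_log_mixture_gap ht0 ht1 (hδ0 u) (hξ0 u)
  have hδ := sq_sum_abs_sub_le_two_mul_sum_mul_klFun hδ0 hm0 hδ1 hm1
    fun u => eq_zero_left_of_mixture_eq_zero ht0 ht1.le (hδ0 u) (hξ0 u)
  have hξ := sq_sum_abs_sub_le_two_mul_sum_mul_klFun hξ0 hm0 hξ1 hm1
    fun u => eq_zero_right_of_mixture_eq_zero ht0.le ht1 (hδ0 u) (hξ0 u)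
  rw [sum_abs_sub_mixture_left ht1.le] at hδ
  rw [sum_abs_sub_mixture_right ht0.le] at hξ
  linarith [mul_le_mul_of_nonneg_left hδ ht0.le,
    mul_le_mul_of_nonneg_left hξ (sub_nonneg.2 ht1.le)]

/-- the negative entropy `Ω(δ) = ∑_u δ(u) ln δ(u)` is 1-strongly convex on
the probability simplex of a finite nonempty set with respect to the ℓ¹-norm:
`Ω(tδ+(1-t)ξ) ≤ tΩ(δ) + (1-t)Ω(ξ) - (t(1-t)/2)‖δ-ξ‖₁²`. (Note `Real.log 0 = 0`, so
`0 ln 0 = 0` holds automatically.) -/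
theorem stmt_4 {U : Type*} [Fintype U] [Nonempty U]
    (Ω : (U → ℝ) → ℝ) (hΩ : ∀ δ, Ω δ = ∑ u, δ u * Real.log (δ u))
    (δ ξ : U → ℝ)
    (hδ0 : ∀ u, 0 ≤ δ u) (hδ1 : ∑ u, δ u = 1)
    (hξ0 : ∀ u, 0 ≤ ξ u) (hξ1 : ∑ u, ξ u = 1)
    (t : ℝ) (ht0 : 0 ≤ t) (ht1 : t ≤ 1) :
    Ω (fun u => t * δ u + (1 - t) * ξ u)
      ≤ t * Ω δ + (1 - t) * Ω ξ - (t * (1 - t) / 2) * (∑ u, |δ u - ξ u|) ^ 2 :=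
  stmt_4_general Ω hΩ δ ξ hδ0 hδ1 hξ0 hξ1 t ht0 ht1
end

section
/- Let P be a nonnegative N × N matrix with spectral radius α(P) < 1. Then there exists a vector v ∈ ℝ^N with all entries strictly positive and a constant w with 0 < w < 1 such that P·v ≤ w·v entrywise. -/
open Matrix Finset Filter
open scoped NNReal ENNReal

attribute [local instance] Matrix.linftyOpNormedRing Matrix.linftyOpNormedAlgebra

/-- if `P` is a nonnegative `N × N` matrix with spectral radius `< 1`
(every complex eigenvalue has modulus `< 1`), then there are a strictly positive vector
`v` and a constant `0 < w < 1` with `P · v ≤ w · v` entrywise. -/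
theorem stmt_6 {N : ℕ} (P : Matrix (Fin N) (Fin N) ℝ)
    (hpos : ∀ i j, 0 ≤ P i j)
    (hspec : ∀ μ ∈ spectrum ℂ (P.map (Complex.ofReal ·)), ‖μ‖ < 1) :
    ∃ (v : Fin N → ℝ) (w : ℝ), (∀ i, 0 < v i) ∧ 0 < w ∧ w < 1 ∧
      ∀ j, P.mulVec v j ≤ w * v j := by
  rcases Nat.eq_zero_or_pos N with hN | hN
  · refine ⟨fun _ => 1, 1/2, fun i => one_pos, by norm_num, by norm_num, fun j => ?_⟩
    exact absurd j.isLt (by omega)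
  haveI : Nonempty (Fin N) := ⟨⟨0, hN⟩⟩
  set Q : Matrix (Fin N) (Fin N) ℂ := P.map (Complex.ofReal ·) with hQ
  haveI : CompleteSpace (Matrix (Fin N) (Fin N) ℂ) := FiniteDimensional.complete ℂ _
  -- spectral radius < 1
  have hsr : spectralRadius ℂ Q < (1 : ℝ≥0) := by
    refine spectrum.spectralRadius_lt_of_forall_lt Q fun z hz => ?_
    exact_mod_cast hspec z hz
  rw [ENNReal.coe_one] at hsr
  -- Gelfand's formula: find n ≥ 1 with ‖Q ^ n‖ < 1
  have hg := spectrum.pow_nnnorm_pow_one_div_tendsto_nhds_spectralRadius Q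
  have hev : ∀ᶠ n : ℕ in atTop, (‖Q ^ n‖₊ : ℝ≥0∞) ^ (1/(n:ℝ)) < 1 :=
    hg.eventually_lt_const hsr
  obtain ⟨n, hQn, hn1⟩ := (hev.and (eventually_ge_atTop 1)).exists
  have hn0 : 0 < (n : ℝ) := by exact_mod_cast hn1
  have hQnorm : ‖Q ^ n‖ < 1 := by
    by_contra h
    push_neg at h
    have h1 : (1 : ℝ≥0) ≤ ‖Q ^ n‖₊ := by
      rwa [← NNReal.coe_le_coe, NNReal.coe_one, coe_nnnorm]
    have : (1 : ℝ≥0∞) ≤ (‖Q ^ n‖₊ : ℝ≥0∞) ^ (1/(n:ℝ)) := by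
      calc (1 : ℝ≥0∞) = (1 : ℝ≥0∞) ^ (1/(n:ℝ)) := (ENNReal.one_rpow _).symm
        _ ≤ _ := ENNReal.rpow_le_rpow (by exact_mod_cast h1) (by positivity)
    exact absurd hQn (not_lt.2 this)
  -- entries of P ^ m are nonneg
  have hPpow : ∀ m : ℕ, ∀ i j, 0 ≤ (P ^ m) i j := by
    intro m
    induction m with
    | zero => intro i j; rw [pow_zero, Matrix.one_apply]; positivity
    | succ m ih =>
        intro i j
        rw [pow_succ, Matrix.mul_apply]
        exact Finset.sum_nonneg fun k _ => mul_nonneg (ih i k) (hpos k j)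
  -- Q ^ m = (P ^ m).map ofReal
  have hmap : ∀ m : ℕ, Q ^ m = (P ^ m).map (Complex.ofReal ·) := by
    intro m
    have h0 : Q = Complex.ofRealHom.mapMatrix P := rfl
    rw [h0, ← map_pow]
    rfl
  -- row sums of P ^ n bounded by ‖Q ^ n‖
  have hrow : ∀ i, ∑ j, (P ^ n) i j ≤ ‖Q ^ n‖ := by
    intro i
    have h1 : (∑ j, ‖(Q ^ n) i j‖₊) ≤ ‖Q ^ n‖₊ := by
      rw [Matrix.linfty_opNNNorm_def]
      exact Finset.le_sup (f := fun i => ∑ j, ‖(Q ^ n) i j‖₊) (Finset.mem_univ i)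
    calc ∑ j, (P ^ n) i j = ∑ j, ‖(Q ^ n) i j‖ := by
          refine Finset.sum_congr rfl fun j _ => ?_
          rw [hmap, Matrix.map_apply, Complex.norm_real, Real.norm_eq_abs,
            abs_of_nonneg (hPpow n i j)]
      _ ≤ ‖Q ^ n‖ := by
          rw [← coe_nnnorm]
          push_cast [← NNReal.coe_le_coe] at h1 ⊢
          simpa using h1
  -- set up w
  set c : ℝ := max ‖Q ^ n‖ (1/2) with hc
  have hc0 : 0 < c := lt_max_of_lt_right (by norm_num)
  have hc1 : c < 1 := max_lt hQnorm (by norm_num)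
  set w : ℝ := c ^ (1/(n:ℝ)) with hw
  have hw0 : 0 < w := Real.rpow_pos_of_pos hc0 _
  have hw1 : w < 1 := Real.rpow_lt_one hc0.le hc1 (by positivity)
  have hwn : w ^ n = c := by
    rw [hw, ← Real.rpow_natCast (c ^ (1/(n:ℝ))) n, ← Real.rpow_mul hc0.le,
      one_div, inv_mul_cancel₀ (ne_of_gt hn0), Real.rpow_one]
  -- the vector
  set u : ℕ → Fin N → ℝ := fun k => (P ^ k) *ᵥ (fun _ => 1) with hu
  set v : Fin N → ℝ := ∑ k ∈ Finset.range n, (w⁻¹)^k • u k with hv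
  have hvapp : ∀ j, v j = ∑ k ∈ Finset.range n, (w⁻¹)^k * u k j := by
    intro j
    simp [hv, Finset.sum_apply]
  have hu0 : ∀ j, u 0 j = 1 := by
    intro j
    simp [hu, Matrix.mulVec, dotProduct, Matrix.one_apply]
  have hunn : ∀ k j, 0 ≤ u k j := by
    intro k j
    simp only [hu, Matrix.mulVec, dotProduct]
    exact Finset.sum_nonneg fun l _ => by simpa using hPpow k j l
  have hun : ∀ j, u n j ≤ c := by
    intro j
    have : u n j = ∑ l, (P ^ n) j l := by
      simp [hu, Matrix.mulVec, dotProduct]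
    rw [this]
    exact (hrow j).trans (le_max_left _ _)
  -- positivity of v
  have hvpos : ∀ j, 0 < v j := by
    intro j
    have h0mem : 0 ∈ Finset.range n := Finset.mem_range.2 hn1
    have : (1:ℝ) = (w⁻¹)^0 * u 0 j := by simp [hu0]
    rw [hvapp]
    calc (0:ℝ) < 1 := one_pos
      _ = (w⁻¹)^0 * u 0 j := this
      _ ≤ _ := Finset.single_le_sum
          (fun k _ => mul_nonneg (by positivity) (hunn k j)) h0mem
  refine ⟨v, w, hvpos, hw0, hw1, fun j => ?_⟩
  -- compute P *ᵥ v
  have hPu : ∀ k, P *ᵥ u k = u (k+1) := by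
    intro k
    rw [hu]
    simp only [Matrix.mulVec_mulVec, ← pow_succ']
  have hPv : P *ᵥ v = ∑ k ∈ Finset.range n, (w⁻¹)^k • u (k+1) := by
    rw [hv]
    rw [show P *ᵥ (∑ k ∈ Finset.range n, (w⁻¹)^k • u k)
        = ∑ k ∈ Finset.range n, P *ᵥ ((w⁻¹)^k • u k) from
      map_sum P.mulVecLin _ _]
    refine Finset.sum_congr rfl fun k _ => ?_
    rw [Matrix.mulVec_smul, hPu]
  set f : ℕ → ℝ := fun k => (w⁻¹)^k * u k j with hf
  have hkey : P.mulVec v j = w * ((v j + f n) - 1) := by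
    have h1 : P.mulVec v j = ∑ k ∈ Finset.range n, (w⁻¹)^k * u (k+1) j := by
      rw [show P.mulVec v = P *ᵥ v from rfl, hPv]
      simp [Finset.sum_apply]
    have h2 : ∀ k, (w⁻¹)^k * u (k+1) j = w * f (k+1) := by
      intro k
      rw [hf]
      have : w * (w⁻¹ ^ (k+1) * u (k+1) j) = (w * w⁻¹) * (w⁻¹ ^ k * u (k+1) j) := by
        rw [pow_succ]; ring
      rw [this, mul_inv_cancel₀ (ne_of_gt hw0), one_mul]
    have h3 : ∑ k ∈ Finset.range n, f (k+1) = (v j + f n) - 1 := by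
      have h4 := Finset.sum_range_succ' f n
      have h5 : ∑ k ∈ Finset.range (n+1), f k = v j + f n := by
        rw [Finset.sum_range_succ, hvapp]
      have h6 : f 0 = 1 := by simp [hf, hu0]
      rw [h5, h6] at h4
      linarith
    rw [h1]
    calc ∑ k ∈ Finset.range n, (w⁻¹)^k * u (k+1) j
        = ∑ k ∈ Finset.range n, w * f (k+1) := Finset.sum_congr rfl fun k _ => h2 k
      _ = w * ∑ k ∈ Finset.range n, f (k+1) := by rw [Finset.mul_sum]
      _ = w * ((v j + f n) - 1) := by rw [h3]
  have hfn : f n ≤ 1 := by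
    have : f n ≤ (w⁻¹)^n * w^n := by
      rw [hf]
      exact mul_le_mul_of_nonneg_left (hwn ▸ hun j) (by positivity)
    calc f n ≤ (w⁻¹)^n * w^n := this
      _ = 1 := by
          rw [← mul_pow, inv_mul_cancel₀ (ne_of_gt hw0), one_pow]
  rw [hkey]
  have : (v j + f n) - 1 ≤ v j := by linarith
  exact mul_le_mul_of_nonneg_left this hw0.le
end

section
/- Let Y₁,…,Y_N be finite nonempty sets with uniform distributions π_i, U₁,…,U_N finite nonempty sets with simplices Δ_i, and r : (∏Y_i) × (∏U_i) → ℝ. For policies γ_i : Y_i → Δ_i define G_j(γ^{-j}, y_j, u_j) = ∑_{y^{-j}, u^{-j}} r(y, u) ∏_{i≠j} γ_i(u_i | y_i) π_i(y_i). Then for any two policy profiles γ, ξ and any y_j, ‖G_j(γ^{-j}, y_j, ·) − G_j(ξ^{-j}, y_j, ·)‖_∞ ≤ ∑_{i≠j} (λ_i(r)/2) ∑_{y_i} π_i(y_i) ‖γ_i(·|y_i) − ξ_i(·|y_i)‖₁. -/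
open Finset

lemma scalar_osc {B : Type*} [Fintype B] [Nonempty B] (f d : B → ℝ)
    (hd : ∑ b, d b = 0) (L : ℝ)
    (hL : Finset.univ.sup' Finset.univ_nonempty f
        - Finset.univ.inf' Finset.univ_nonempty f ≤ L) :
    |∑ b, f b * d b| ≤ (L/2) * ∑ b, |d b| := by
  set M := Finset.univ.sup' Finset.univ_nonempty f with hM
  set m := Finset.univ.inf' Finset.univ_nonempty f with hm
  set c := (M + m)/2 with hc
  have h1 : ∑ b, f b * d b = ∑ b, (f b - c) * d b := by
    simp [sub_mul, Finset.sum_sub_distrib, ← Finset.mul_sum, hd]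
  rw [h1]
  calc |∑ b, (f b - c) * d b| ≤ ∑ b, |(f b - c) * d b| := Finset.abs_sum_le_sum_abs _ _
    _ ≤ ∑ b, (L/2) * |d b| := by
        refine Finset.sum_le_sum fun b _ => ?_
        rw [abs_mul]
        refine mul_le_mul_of_nonneg_right ?_ (abs_nonneg _)
        have h2 : f b ≤ M := Finset.le_sup' f (Finset.mem_univ b)
        have h3 : m ≤ f b := Finset.inf'_le f (Finset.mem_univ b)
        rw [abs_le]; constructor <;> [skip; skip] <;> simp only [hc] <;> linarith
    _ = (L/2) * ∑ b, |d b| := by rw [Finset.mul_sum]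

lemma core_step {ι : Type*} [Fintype ι] [DecidableEq ι]
    {A B : ι → Type*} [∀ i, Fintype (A i)] [∀ i, Fintype (B i)]
    [∀ i, Nonempty (A i)] [∀ i, Nonempty (B i)]
    (R : (∀ i, A i × B i) → ℝ) (a : ι)
    (w w' : ∀ i, A i × B i → ℝ)
    (hag : ∀ i, i ≠ a → w i = w' i)
    (hpos : ∀ i, i ≠ a → ∀ z, 0 ≤ w i z)
    (hsum : ∀ i, i ≠ a → ∑ z, w i z = 1)
    (hδ : ∀ x : A a, ∑ b : B a, (w a (x,b) - w' a (x,b)) = 0)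
    (L : ℝ)
    (hL : ∀ (z : ∀ i, A i × B i) (x : A a),
      Finset.univ.sup' Finset.univ_nonempty (fun b : B a => R (Function.update z a (x,b)))
      - Finset.univ.inf' Finset.univ_nonempty (fun b : B a => R (Function.update z a (x,b))) ≤ L) :
    |(∑ z, R z * ∏ i, w i (z i)) - ∑ z, R z * ∏ i, w' i (z i)|
      ≤ (L/2) * ∑ s : A a × B a, |w a s - w' a s| := by
  classical
  set e := Equiv.piSplitAt a (fun i => A i × B i) with he
  -- difference of products
  have hprod : ∀ z : ∀ i, A i × B i,
      (∏ i, w i (z i)) - (∏ i, w' i (z i))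
        = (w a (z a) - w' a (z a)) * ∏ i ∈ Finset.univ.erase a, w i (z i) := by
    intro z
    rw [← Finset.mul_prod_erase Finset.univ (fun i => w i (z i)) (Finset.mem_univ a),
        ← Finset.mul_prod_erase Finset.univ (fun i => w' i (z i)) (Finset.mem_univ a)]
    have : ∏ i ∈ Finset.univ.erase a, w' i (z i) = ∏ i ∈ Finset.univ.erase a, w i (z i) :=
      Finset.prod_congr rfl fun i hi => by rw [hag i (Finset.mem_erase.1 hi).1]
    rw [this]; ring
  have hdiff : (∑ z, R z * ∏ i, w i (z i)) - ∑ z, R z * ∏ i, w' i (z i)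
      = ∑ z, R z * ((w a (z a) - w' a (z a)) * ∏ i ∈ Finset.univ.erase a, w i (z i)) := by
    rw [← Finset.sum_sub_distrib]
    exact Finset.sum_congr rfl fun z _ => by rw [← mul_sub, hprod z]
  rw [hdiff]
  -- reindex via e.symm
  have hre : ∀ (f : (∀ i, A i × B i) → ℝ), ∑ z, f z = ∑ p, f (e.symm p) :=
    fun f => (Equiv.sum_comp e.symm f).symm
  rw [hre]
  rw [Fintype.sum_prod_type_right]   -- p = (s, q) : (A a × B a) × Π j:{j≠a}, ...
  -- facts about e.symm
  have hsa : ∀ (s : A a × B a) (q : ∀ jj : {jj // jj ≠ a}, A jj × B jj), e.symm (s, q) a = s := by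
    intro s q; simp [he, Equiv.piSplitAt_symm_apply]
  have hsne : ∀ (s : A a × B a) (q : ∀ jj : {jj // jj ≠ a}, A jj × B jj) (i : ι) (h : i ≠ a),
      e.symm (s, q) i = q ⟨i, h⟩ := by
    intro s q i h; simp [he, Equiv.piSplitAt_symm_apply, h]
  -- the product part depends only on q
  set Q : (∀ jj : {jj // jj ≠ a}, A jj × B jj) → ℝ := fun q => ∏ t : {jj // jj ≠ a}, w t (q t)
    with hQ
  have hPQ : ∀ s q, (∏ i ∈ Finset.univ.erase a, w i (e.symm (s, q) i)) = Q q := by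
    intro s q
    rw [hQ]; dsimp only
    rw [Finset.prod_subtype (p := fun i => i ≠ a) (Finset.univ.erase a)
      (fun i => by simp [Finset.mem_erase]) (fun i => w i (e.symm (s,q) i))]
    exact Finset.prod_congr rfl fun t _ => by rw [hsne s q t t.2]
  have hQpos : ∀ q, 0 ≤ Q q := fun q => Finset.prod_nonneg fun t _ => hpos t t.2 _
  have hQsum : ∑ q, Q q = 1 := by
    rw [hQ, ← Fintype.prod_sum]
    exact Finset.prod_eq_one fun t _ => hsum t t.2
  set D : A a × B a → ℝ := fun s => w a s - w' a s with hD
  have key : ∀ q, |∑ s : A a × B a, R (e.symm (s,q)) * D s| ≤ (L/2) * ∑ s, |D s| := by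
    intro q
    rw [Fintype.sum_prod_type]
    calc |∑ x, ∑ b, R (e.symm ((x,b),q)) * D (x,b)|
        ≤ ∑ x, |∑ b, R (e.symm ((x,b),q)) * D (x,b)| := Finset.abs_sum_le_sum_abs _ _
      _ ≤ ∑ x, (L/2) * ∑ b, |D (x,b)| := by
          refine Finset.sum_le_sum fun x _ => ?_
          refine scalar_osc _ _ (hδ x) L ?_
          set z0 := e.symm ((x, Classical.arbitrary (B a)), q) with hz0
          have hfeq : (fun b => R (e.symm ((x,b),q)))
              = fun b => R (Function.update z0 a (x,b)) := by
            funext b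
            congr 1
            funext i
            by_cases h : i = a
            · subst h; rw [Function.update_self, hsa]
            · rw [Function.update_of_ne h, hsne _ _ _ h, hz0, hsne _ _ _ h]
          rw [hfeq]
          exact hL z0 x
      _ = (L/2) * ∑ s, |D s| := by rw [← Finset.mul_sum, Fintype.sum_prod_type]
  have hterm : ∀ q s, R (e.symm (s,q)) * ((w a (e.symm (s,q) a) - w' a (e.symm (s,q) a))
      * ∏ i ∈ Finset.univ.erase a, w i (e.symm (s,q) i)) = Q q * (R (e.symm (s,q)) * D s) := by
    intro q s; rw [hsa, hPQ, hD]; ring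
  calc |∑ q, ∑ s, R (e.symm (s,q)) * ((w a (e.symm (s,q) a) - w' a (e.symm (s,q) a))
        * ∏ i ∈ Finset.univ.erase a, w i (e.symm (s,q) i))|
      = |∑ q, Q q * ∑ s, R (e.symm (s,q)) * D s| := by
        congr 1
        refine Finset.sum_congr rfl fun q _ => ?_
        rw [Finset.mul_sum]
        exact Finset.sum_congr rfl fun s _ => hterm q s
    _ ≤ ∑ q, |Q q * ∑ s, R (e.symm (s,q)) * D s| := Finset.abs_sum_le_sum_abs _ _
    _ = ∑ q, Q q * |∑ s, R (e.symm (s,q)) * D s| := by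
        refine Finset.sum_congr rfl fun q _ => ?_
        rw [abs_mul, abs_of_nonneg (hQpos q)]
    _ ≤ ∑ q, Q q * ((L/2) * ∑ s, |D s|) :=
        Finset.sum_le_sum fun q _ => mul_le_mul_of_nonneg_left (key q) (hQpos q)
    _ = (∑ q, Q q) * ((L/2) * ∑ s, |D s|) := by rw [Finset.sum_mul]
    _ = (L/2) * ∑ s, |D s| := by rw [hQsum, one_mul]
section Aux
variable {N : ℕ} {Y U : Fin N → Type*} [∀ i, Fintype (Y i)]
  [∀ i, DecidableEq (Y i)] [∀ i, DecidableEq (U i)]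

/-- The kernel on `Y i × U i` associated with a policy profile: a point mass at `(yj,uj)`
in coordinate `j`, and `σ i (·) (·) ⋅ π i` elsewhere. -/
noncomputable def Wker (j : Fin N) (yj : Y j) (uj : U j) (σ : ∀ i, Y i → U i → ℝ)
    (i : Fin N) (p : Y i × U i) : ℝ :=
  if h : i = j then (if h ▸ p = (yj, uj) then 1 else 0)
  else σ i p.1 p.2 * (Fintype.card (Y i) : ℝ)⁻¹

lemma Wker_self (j : Fin N) (yj : Y j) (uj : U j) (σ : ∀ i, Y i → U i → ℝ)
    (p : Y j × U j) : Wker j yj uj σ j p = if p = (yj, uj) then 1 else 0 := by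
  simp [Wker]

lemma Wker_ne (j : Fin N) (yj : Y j) (uj : U j) (σ : ∀ i, Y i → U i → ℝ)
    {i : Fin N} (h : i ≠ j) (p : Y i × U i) :
    Wker j yj uj σ i p = σ i p.1 p.2 * (Fintype.card (Y i) : ℝ)⁻¹ := dif_neg h

end Aux

/-- with `G_j(γ^{-j}, y_j, u_j) = ∑_{y^{-j},u^{-j}} r(y,u) ∏_{i≠j}
γ_i(u_i|y_i) π_i(y_i)` (uniform `π_i`), for any two policy profiles `γ, ξ` and any `y_j`,
`‖G_j(γ^{-j},y_j,·) - G_j(ξ^{-j},y_j,·)‖_∞ ≤ ∑_{i≠j} (λ_i(r)/2) ∑_{y_i} π_i(y_i)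
‖γ_i(·|y_i) - ξ_i(·|y_i)‖₁`. -/
theorem stmt_13 {N : ℕ}
    {Y U : Fin N → Type*} [∀ i, Fintype (Y i)] [∀ i, Nonempty (Y i)]
    [∀ i, Fintype (U i)] [∀ i, Nonempty (U i)]
    [∀ i, DecidableEq (Y i)] [∀ i, DecidableEq (U i)]
    (r : (∀ i, Y i) → (∀ i, U i) → ℝ)
    (lam : Fin N → ℝ)
    (hlam : ∀ i, lam i =
      Finset.univ.sup' Finset.univ_nonempty
        (fun p : (∀ k, Y k) × (∀ k, U k) =>
          Finset.univ.sup' Finset.univ_nonempty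
              (fun v : U i => r p.1 (Function.update p.2 i v))
            - Finset.univ.inf' Finset.univ_nonempty
              (fun v : U i => r p.1 (Function.update p.2 i v))))
    (G : (j : Fin N) → (∀ i, Y i → U i → ℝ) → Y j → U j → ℝ)
    (hG : ∀ j γ yj uj, G j γ yj uj =
      ∑ y : ∀ i, Y i, ∑ u : ∀ i, U i,
        if y j = yj ∧ u j = uj then
          r y u * ∏ i ∈ Finset.univ.erase j,
            (γ i (y i) (u i) * (Fintype.card (Y i) : ℝ)⁻¹)
        else 0)
    (γ ξ : ∀ i, Y i → U i → ℝ)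
    (hγ : ∀ i yi, (∀ v, 0 ≤ γ i yi v) ∧ ∑ v, γ i yi v = 1)
    (hξ : ∀ i yi, (∀ v, 0 ≤ ξ i yi v) ∧ ∑ v, ξ i yi v = 1)
    (j : Fin N) (yj : Y j) :
    ∀ uj : U j, |G j γ yj uj - G j ξ yj uj| ≤
      ∑ i ∈ Finset.univ.erase j, (lam i / 2) *
        ∑ yi : Y i, (Fintype.card (Y i) : ℝ)⁻¹ * ∑ v, |γ i yi v - ξ i yi v| := by
  intro uj
  classical
  set R : (∀ i, Y i × U i) → ℝ := fun z => r (fun i => (z i).1) (fun i => (z i).2) with hR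
  set FF : (∀ i, Y i → U i → ℝ) → ℝ :=
    fun σ => ∑ z : ∀ i, Y i × U i, R z * ∏ i, Wker j yj uj σ i (z i) with hFF
  -- reindexing lemma
  have hpair : ∀ (f : (∀ i, Y i) → (∀ i, U i) → ℝ),
      ∑ y, ∑ u, f y u = ∑ z : ∀ i, Y i × U i, f (fun i => (z i).1) (fun i => (z i).2) := by
    intro f
    have h1 : ∑ p : (∀ i, Y i) × (∀ i, U i), f p.1 p.2 = ∑ y, ∑ u, f y u :=
      Fintype.sum_prod_type _
    rw [← h1]
    exact (Equiv.sum_comp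
      (⟨fun z => (fun i => (z i).1, fun i => (z i).2), fun p i => (p.1 i, p.2 i),
        fun z => rfl, fun p => rfl⟩ : (∀ i, Y i × U i) ≃ (∀ i, Y i) × (∀ i, U i))
      (fun p => f p.1 p.2)).symm
  -- G as a z-sum
  have hFeq : ∀ σ : ∀ i, Y i → U i → ℝ, G j σ yj uj = FF σ := by
    intro σ
    rw [hG, hpair]
    change _ = ∑ z : ∀ i, Y i × U i, R z * ∏ i, Wker j yj uj σ i (z i)
    refine Finset.sum_congr rfl fun z _ => ?_
    have hsplit : (∏ i, Wker j yj uj σ i (z i))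
        = Wker j yj uj σ j (z j) * ∏ i ∈ Finset.univ.erase j, Wker j yj uj σ i (z i) :=
      (Finset.mul_prod_erase Finset.univ _ (Finset.mem_univ j)).symm
    have hprodeq : (∏ i ∈ Finset.univ.erase j, Wker j yj uj σ i (z i))
        = ∏ i ∈ Finset.univ.erase j, (σ i (z i).1 (z i).2 * (Fintype.card (Y i) : ℝ)⁻¹) :=
      Finset.prod_congr rfl fun i hi => Wker_ne j yj uj σ (Finset.mem_erase.1 hi).1 (z i)
    rw [hsplit, Wker_self, hprodeq]
    by_cases hzj : z j = (yj, uj)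
    · rw [if_pos hzj, if_pos (show (fun i => (z i).1) j = yj ∧ (fun i => (z i).2) j = uj
        from ⟨by simp [hzj], by simp [hzj]⟩), one_mul]
    · rw [if_neg hzj, if_neg (show ¬((fun i => (z i).1) j = yj ∧ (fun i => (z i).2) j = uj)
        from fun hc => hzj (Prod.ext hc.1 hc.2)), zero_mul, mul_zero]
  -- probability facts about the kernels
  have hWpos : ∀ (σ : ∀ i, Y i → U i → ℝ), (∀ i yi v, 0 ≤ σ i yi v) →
      ∀ i p, 0 ≤ Wker j yj uj σ i p := by
    intro σ hσ i p
    by_cases h : i = j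
    · subst h; rw [Wker_self]; positivity
    · rw [Wker_ne j yj uj σ h]
      exact mul_nonneg (hσ i p.1 p.2) (by positivity)
  have hWsum : ∀ (σ : ∀ i, Y i → U i → ℝ), (∀ i yi, ∑ v, σ i yi v = 1) →
      ∀ i, ∑ p : Y i × U i, Wker j yj uj σ i p = 1 := by
    intro σ hσ i
    by_cases h : i = j
    · subst h
      simp only [Wker_self]
      rw [Finset.sum_ite_eq' Finset.univ (yj, uj) (fun _ => (1:ℝ))]
      simp
    · simp only [Wker_ne j yj uj σ h]
      rw [Fintype.sum_prod_type]
      have : ∀ x : Y i, ∑ b : U i, σ i x b * (Fintype.card (Y i) : ℝ)⁻¹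
          = (Fintype.card (Y i) : ℝ)⁻¹ := by
        intro x
        rw [← Finset.sum_mul, hσ i x, one_mul]
      simp only [this]
      rw [Finset.sum_const, Finset.card_univ, nsmul_eq_mul]
      rw [mul_inv_cancel₀]
      exact_mod_cast Fintype.card_ne_zero
  -- the bound for a single coordinate
  set bnd : Fin N → ℝ := fun i => (lam i / 2) *
      ∑ yi : Y i, (Fintype.card (Y i) : ℝ)⁻¹ * ∑ v, |γ i yi v - ξ i yi v| with hbnd
  set prof : Finset (Fin N) → ∀ i, Y i → U i → ℝ :=
      fun S i => if i ∈ S then ξ i else γ i with hprof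
  have hprofpos : ∀ S i yi v, 0 ≤ prof S i yi v := by
    intro S i yi v
    rw [hprof]; dsimp only
    by_cases h : i ∈ S
    · rw [if_pos h]; exact (hξ i yi).1 v
    · rw [if_neg h]; exact (hγ i yi).1 v
  have hprofsum : ∀ S i yi, ∑ v, prof S i yi v = 1 := by
    intro S i yi
    rw [hprof]; dsimp only
    by_cases h : i ∈ S
    · rw [if_pos h]; exact (hξ i yi).2
    · rw [if_neg h]; exact (hγ i yi).2
  -- telescoping
  have main : ∀ S : Finset (Fin N), S ⊆ Finset.univ.erase j →
      |FF (prof S) - FF γ| ≤ ∑ i ∈ S, bnd i := by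
    intro S
    induction S using Finset.induction_on with
    | empty =>
      intro _
      have h0 : prof ∅ = γ := funext fun i => by
        rw [hprof]; dsimp only; rw [if_neg (Finset.notMem_empty i)]
      rw [h0]
      simp
    | @insert a S ha ih =>
      intro hsub
      have haj : a ≠ j := (Finset.mem_erase.1 (hsub (Finset.mem_insert_self a S))).1
      have hS : S ⊆ Finset.univ.erase j := fun x hx => hsub (Finset.mem_insert_of_mem hx)
      have step : |FF (prof (insert a S)) - FF (prof S)| ≤ bnd a := by
        have hcore := core_step R a
          (Wker j yj uj (prof (insert a S))) (Wker j yj uj (prof S))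
          (fun i hi => ?_) (fun i _ p => hWpos _ (hprofpos _) i p)
          (fun i _ => hWsum _ (hprofsum _) i) (fun x => ?_) (lam a) (fun z x => ?_)
        · calc |FF (prof (insert a S)) - FF (prof S)|
              ≤ (lam a / 2) * ∑ s : Y a × U a,
                |Wker j yj uj (prof (insert a S)) a s - Wker j yj uj (prof S) a s| := hcore
            _ = bnd a := by
              rw [hbnd]; dsimp only
              congr 1
              rw [Fintype.sum_prod_type]
              refine Finset.sum_congr rfl fun x _ => ?_
              rw [Finset.mul_sum]
              refine Finset.sum_congr rfl fun b _ => ?_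
              rw [Wker_ne j yj uj _ haj, Wker_ne j yj uj _ haj]
              rw [hprof]; dsimp only
              rw [if_pos (Finset.mem_insert_self a S), if_neg ha,
                ← sub_mul, abs_mul, abs_sub_comm]
              rw [abs_of_nonneg (by positivity : (0:ℝ) ≤ (Fintype.card (Y a) : ℝ)⁻¹)]
              ring
        -- agreement off `a`
        · by_cases h : i = j
          · subst h
            funext p
            rw [Wker_self, Wker_self]
          · funext p
            rw [Wker_ne j yj uj _ h, Wker_ne j yj uj _ h]
            have : prof (insert a S) i = prof S i := by
              rw [hprof]; dsimp only
              by_cases hiS : i ∈ S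
              · rw [if_pos (Finset.mem_insert_of_mem hiS), if_pos hiS]
              · rw [if_neg (by simp [Finset.mem_insert, hi, hiS]), if_neg hiS]
            rw [this]
        -- conditional sums vanish
        · simp only [Wker_ne j yj uj _ haj]
          rw [hprof]; dsimp only
          simp only [if_pos (Finset.mem_insert_self a S), if_neg ha]
          simp only [← sub_mul]
          rw [← Finset.sum_mul, Finset.sum_sub_distrib, (hξ a x).2, (hγ a x).2,
            sub_self, zero_mul]
        -- oscillation bound
        · set b0 := Classical.arbitrary (U a) with hb0
          set p1 : ∀ i, Y i := fun i => (Function.update z a (x, b0) i).1 with hp1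
          set p2 : ∀ i, U i := fun i => (Function.update z a (x, b0) i).2 with hp2
          have hfeq : (fun b : U a => R (Function.update z a (x, b)))
              = fun b => r p1 (Function.update p2 a b) := by
            funext b
            rw [hR]; dsimp only
            have e1 : (fun i => (Function.update z a (x, b) i).1) = p1 := by
              funext i
              rw [hp1]; dsimp only
              by_cases h : i = a
              · subst h; rw [Function.update_self, Function.update_self]
              · rw [Function.update_of_ne h, Function.update_of_ne h]
            have e2 : (fun i => (Function.update z a (x, b) i).2)
                = Function.update p2 a b := by
              funext i
              by_cases h : i = a
              · subst h; rw [Function.update_self, Function.update_self]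
              · rw [Function.update_of_ne h, Function.update_of_ne h, hp2]
                dsimp only
                rw [Function.update_of_ne h]
            rw [e1, e2]
          rw [hfeq, hlam a]
          exact Finset.le_sup' (fun p : (∀ k, Y k) × (∀ k, U k) =>
            Finset.univ.sup' Finset.univ_nonempty
              (fun v : U a => r p.1 (Function.update p.2 a v))
            - Finset.univ.inf' Finset.univ_nonempty
              (fun v : U a => r p.1 (Function.update p.2 a v)))
            (Finset.mem_univ (p1, p2))
      calc |FF (prof (insert a S)) - FF γ|
          ≤ |FF (prof (insert a S)) - FF (prof S)| + |FF (prof S) - FF γ| := by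
            have := abs_sub_le (FF (prof (insert a S))) (FF (prof S)) (FF γ)
            linarith [this]
        _ ≤ bnd a + ∑ i ∈ S, bnd i := add_le_add step (ih hS)
        _ = ∑ i ∈ insert a S, bnd i := (Finset.sum_insert ha).symm
  -- conclude
  have hlast : FF (prof (Finset.univ.erase j)) = FF ξ := by
    rw [hFF]
    refine Finset.sum_congr rfl fun z _ => ?_
    congr 1
    refine Finset.prod_congr rfl fun i _ => ?_
    by_cases h : i = j
    · subst h; rw [Wker_self, Wker_self]
    · rw [Wker_ne j yj uj _ h, Wker_ne j yj uj _ h]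
      have : prof (Finset.univ.erase j) i = ξ i := by
        rw [hprof]; dsimp only
        rw [if_pos (Finset.mem_erase.2 ⟨h, Finset.mem_univ i⟩)]
      rw [this]
  rw [hFeq γ, hFeq ξ, ← hlast, abs_sub_comm]
  exact main (Finset.univ.erase j) (subset_refl _)
end

section
/- In the regularized team model with finite observation and action spaces, for any two policy profiles γ, ξ ∈ ∏Γ_i and each agent j, the best response maps satisfy ‖B_j(γ^{-j}) − B_j(ξ^{-j})‖_{L¹} ≤ (1/ρ_j) ∑_{i≠j} (λ_i(r)/2) ‖γ_i − ξ_i‖_{L¹}. -/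
/-!
By strong convexity, `⟨g, ·⟩ - Ω_j` decays quadratically (in ℓ¹) away from its maximizer on
the simplex; comparing the maximizers for `g` and `g'` gives
`ρ_j ‖δ - δ'‖₁² ≤ ⟨g - g', δ - δ'⟩ ≤ ‖g - g'‖_∞ ‖δ - δ'‖₁`.

The payoff `G_j(γ^{-j}, y_j, ·)` integrates `r` against a product of one weight per agent.
Replacing `γ_i` by `ξ_i` changes a single factor by a signed weight whose sum over `u_i` vanishes
for every `y_i`, so `r` may be centred at the midrange of its `u_i`-section, which is within
`λ_i(r)/2` of `r`; this bounds the change by `λ_i(r)/2 · ‖γ_i - ξ_i‖_{L¹}`. Swapping the agents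
one at a time sums these bounds.
-/

open Finset Function Filter Topology

theorem le_of_forall_le_add_mul {A B c : ℝ} (h : ∀ t : ℝ, 0 < t → t ≤ 1 → A ≤ B + c * t) :
    A ≤ B := by
  have hlim : Tendsto (fun t => B + c * t) (𝓝[>] 0) (𝓝 B) := by
    refine ((by fun_prop : Continuous fun t : ℝ => B + c * t).tendsto' 0 B ?_).mono_left
      nhdsWithin_le_nhds
    simp
  exact ge_of_tendsto hlim <| by
    filter_upwards [Ioc_mem_nhdsGT one_pos] with t ht using h t ht.1 ht.2

section RegularizedArgmax

variable {V : Type*} [Fintype V]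

/-- Strong convexity with respect to the ℓ¹-norm (Mathlib's `StrongConvexOn` on `V → ℝ` would use
the sup norm). -/
def StrongConvexOnStdSimplexL1 (ρ : ℝ) (Ω : (V → ℝ) → ℝ) : Prop :=
  ∀ δ δ' : V → ℝ, δ ∈ stdSimplex ℝ V → δ' ∈ stdSimplex ℝ V → ∀ t : ℝ, 0 ≤ t → t ≤ 1 →
    Ω (fun v => t * δ v + (1 - t) * δ' v) ≤
      t * Ω δ + (1 - t) * Ω δ' - ρ * (t * (1 - t) / 2) * (∑ v, |δ v - δ' v|) ^ 2

variable {ρ : ℝ} {Ω : (V → ℝ) → ℝ}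

theorem StrongConvexOnStdSimplexL1.add_sq_le_of_isMaxOn (hΩ : StrongConvexOnStdSimplexL1 ρ Ω)
    {g δ δ' : V → ℝ} (hδ : δ ∈ stdSimplex ℝ V) (hδ' : δ' ∈ stdSimplex ℝ V)
    (hmax : IsMaxOn (fun β => ∑ v, g v * β v - Ω β) (stdSimplex ℝ V) δ) :
    (∑ v, g v * δ' v - Ω δ') + ρ / 2 * (∑ v, |δ v - δ' v|) ^ 2 ≤ ∑ v, g v * δ v - Ω δ := by
  refine le_of_forall_le_add_mul (c := ρ / 2 * (∑ v, |δ v - δ' v|) ^ 2) fun t ht0 ht1 => ?_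
  have hmem : (fun v => t * δ' v + (1 - t) * δ v) ∈ stdSimplex ℝ V :=
    convex_stdSimplex ℝ V hδ' hδ ht0.le (by linarith) (by ring)
  have hopt := isMaxOn_iff.1 hmax _ hmem
  have hconv := hΩ δ' δ hδ' hδ t ht0.le ht1
  have hlin : ∑ v, g v * (t * δ' v + (1 - t) * δ v)
      = t * ∑ v, g v * δ' v + (1 - t) * ∑ v, g v * δ v := by
    simp only [mul_sum, ← sum_add_distrib]
    exact sum_congr rfl fun v _ => by ring
  have hsymm : ∑ v, |δ' v - δ v| = ∑ v, |δ v - δ' v| :=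
    sum_congr rfl fun v _ => abs_sub_comm _ _
  simp only [hlin] at hopt
  rw [hsymm] at hconv
  refine le_of_mul_le_mul_left ?_ ht0
  nlinarith

theorem StrongConvexOnStdSimplexL1.sq_le_of_isMaxOn (hΩ : StrongConvexOnStdSimplexL1 ρ Ω)
    {g g' δ δ' : V → ℝ} (hδ : δ ∈ stdSimplex ℝ V) (hδ' : δ' ∈ stdSimplex ℝ V)
    (hmax : IsMaxOn (fun β => ∑ v, g v * β v - Ω β) (stdSimplex ℝ V) δ)
    (hmax' : IsMaxOn (fun β => ∑ v, g' v * β v - Ω β) (stdSimplex ℝ V) δ') :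
    ρ * (∑ v, |δ v - δ' v|) ^ 2 ≤ ∑ v, (g v - g' v) * (δ v - δ' v) := by
  have h := hΩ.add_sq_le_of_isMaxOn hδ hδ' hmax
  have h' := hΩ.add_sq_le_of_isMaxOn hδ' hδ hmax'
  have hsymm : ∑ v, |δ' v - δ v| = ∑ v, |δ v - δ' v| :=
    sum_congr rfl fun v _ => abs_sub_comm _ _
  have hexpand : ∑ v, (g v - g' v) * (δ v - δ' v)
      = (∑ v, g v * δ v - ∑ v, g v * δ' v) - (∑ v, g' v * δ v - ∑ v, g' v * δ' v) := by
    simp only [← sum_sub_distrib]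
    exact sum_congr rfl fun v _ => by ring
  rw [hsymm] at h'
  linarith

theorem StrongConvexOnStdSimplexL1.mul_dist_le_of_isMaxOn [Nonempty V]
    (hΩ : StrongConvexOnStdSimplexL1 ρ Ω)
    {g g' δ δ' : V → ℝ} (hδ : δ ∈ stdSimplex ℝ V) (hδ' : δ' ∈ stdSimplex ℝ V)
    (hmax : IsMaxOn (fun β => ∑ v, g v * β v - Ω β) (stdSimplex ℝ V) δ)
    (hmax' : IsMaxOn (fun β => ∑ v, g' v * β v - Ω β) (stdSimplex ℝ V) δ')
    {M : ℝ} (hM : ∀ v, |g v - g' v| ≤ M) :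
    ρ * ∑ v, |δ v - δ' v| ≤ M := by
  set s := ∑ v, |δ v - δ' v|
  have hpair : ∑ v, (g v - g' v) * (δ v - δ' v) ≤ M * s := by
    rw [mul_sum]
    refine sum_le_sum fun v _ => ?_
    calc (g v - g' v) * (δ v - δ' v) ≤ |g v - g' v| * |δ v - δ' v| := by
          rw [← abs_mul]; exact le_abs_self _
      _ ≤ M * |δ v - δ' v| := mul_le_mul_of_nonneg_right (hM v) (abs_nonneg _)
  have hsq := hΩ.sq_le_of_isMaxOn hδ hδ' hmax hmax'
  have hs0 : 0 ≤ s := sum_nonneg fun v _ => abs_nonneg _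
  rcases hs0.eq_or_lt with hs | hs
  · rw [← hs, mul_zero]
    exact (abs_nonneg _).trans (hM (Classical.arbitrary V))
  · refine le_of_mul_le_mul_right ?_ hs
    nlinarith

end RegularizedArgmax

theorem abs_sub_midpoint_le {A : Type*} [Fintype A] [Nonempty A] (f : A → ℝ) (x : A) :
    |f x - (univ.sup' univ_nonempty f + univ.inf' univ_nonempty f) / 2|
      ≤ (univ.sup' univ_nonempty f - univ.inf' univ_nonempty f) / 2 := by
  have := le_sup' f (mem_univ x)
  have := inf'_le f (mem_univ x)
  rw [abs_le]
  constructor <;> linarith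

def IsProbWeight {A B : Type*} [Fintype A] [Fintype B] (w : A → B → ℝ) : Prop :=
  (∀ a b, 0 ≤ w a b) ∧ ∑ a, ∑ b, w a b = 1

section ProductWeights

variable {ι : Type*} [Fintype ι] [DecidableEq ι] {Y U : ι → Type*}

theorem prod_update_apply_eq_mul_prod_erase (w : ∀ i, Y i → U i → ℝ) (a : ι)
    (x : Y a → U a → ℝ) (y : ∀ i, Y i) (u : ∀ i, U i) :
    ∏ i, update w a x i (y i) (u i) = x (y a) (u a) * ∏ i ∈ univ.erase a, w i (y i) (u i) := by
  rw [← mul_prod_erase _ _ (mem_univ a), update_self]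
  congr 1
  exact prod_congr rfl fun i hi => by rw [update_of_ne (ne_of_mem_erase hi)]

variable [∀ i, Fintype (U i)]

theorem sum_mul_apply_eq_zero_of_update_invariant {a : ι} [Nonempty (U a)]
    {F : (∀ i, U i) → ℝ} {g : U a → ℝ} (hF : ∀ u v, F (update u a v) = F u)
    (hg : ∑ v, g v = 0) : ∑ u, F u * g (u a) = 0 := by
  obtain ⟨v₀⟩ := ‹Nonempty (U a)›
  let e := Equiv.piSplitAt a U
  have he : ∀ v w, e.symm (v, w) = update (e.symm (v₀, w)) a v := fun v w => by
    ext i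
    by_cases hi : i = a
    · subst hi; simp [e]
    · simp [e, hi]
  have hFe : ∀ v w, F (e.symm (v, w)) = F (e.symm (v₀, w)) := fun v w => by rw [he, hF]
  rw [← e.symm.sum_comp, Fintype.sum_prod_type]
  calc ∑ v, ∑ w, F (e.symm (v, w)) * g (e.symm (v, w) a)
      = ∑ v, (∑ w, F (e.symm (v₀, w))) * g v := by
        refine sum_congr rfl fun v _ => ?_
        rw [sum_mul]
        exact sum_congr rfl fun w _ => by rw [hFe, he v w, update_self]
    _ = 0 := by rw [← mul_sum, hg, mul_zero]

variable [∀ i, Fintype (Y i)]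

def expectProd (r : (∀ i, Y i) → (∀ i, U i) → ℝ) (w : ∀ i, Y i → U i → ℝ) : ℝ :=
  ∑ y, ∑ u, r y u * ∏ i, w i (y i) (u i)

theorem expectProd_update_sub (r : (∀ i, Y i) → (∀ i, U i) → ℝ) (w : ∀ i, Y i → U i → ℝ)
    (a : ι) (p q : Y a → U a → ℝ) :
    expectProd r (update w a (p - q)) = expectProd r (update w a p) - expectProd r (update w a q) := by
  simp only [expectProd, prod_update_apply_eq_mul_prod_erase, ← sum_sub_distrib]
  exact sum_congr rfl fun y _ => sum_congr rfl fun u _ => by simp only [Pi.sub_apply]; ring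

theorem expectProd_sub_left (r s : (∀ i, Y i) → (∀ i, U i) → ℝ) (w : ∀ i, Y i → U i → ℝ) :
    expectProd (r - s) w = expectProd r w - expectProd s w := by
  simp only [expectProd, Pi.sub_apply, sub_mul, sum_sub_distrib]

theorem expectProd_one (w : ∀ i, Y i → U i → ℝ) :
    expectProd (fun _ _ => 1) w = ∏ i, ∑ yi, ∑ ui, w i yi ui := by
  simp only [expectProd, one_mul, Fintype.prod_sum]

theorem expectProd_update_eq_zero {C : (∀ i, Y i) → (∀ i, U i) → ℝ} (w : ∀ i, Y i → U i → ℝ)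
    {a : ι} [Nonempty (U a)] (hC : ∀ y u v, C y (update u a v) = C y u) {d : Y a → U a → ℝ}
    (hd : ∀ ya, ∑ ua, d ya ua = 0) : expectProd C (update w a d) = 0 := by
  refine sum_eq_zero fun y _ => ?_
  calc ∑ u, C y u * ∏ i, update w a d i (y i) (u i)
      = ∑ u, (C y u * ∏ i ∈ univ.erase a, w i (y i) (u i)) * d (y a) (u a) := by
        simp only [prod_update_apply_eq_mul_prod_erase]
        exact sum_congr rfl fun u _ => by ring
    _ = 0 := by
        refine sum_mul_apply_eq_zero_of_update_invariant (fun u v => ?_) (hd (y a))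
        rw [hC]
        congr 1
        exact prod_congr rfl fun i hi => by rw [update_of_ne (ne_of_mem_erase hi)]


variable [∀ i, Nonempty (U i)]

theorem abs_expectProd_update_le (r : (∀ i, Y i) → (∀ i, U i) → ℝ) {w : ∀ i, Y i → U i → ℝ}
    {a : ι} {d : Y a → U a → ℝ} {c : ℝ} (hw : ∀ i ≠ a, IsProbWeight (w i))
    (hd : ∀ ya, ∑ ua, d ya ua = 0)
    (hosc : ∀ y u, univ.sup' univ_nonempty (fun v => r y (update u a v))
      - univ.inf' univ_nonempty (fun v => r y (update u a v)) ≤ c) :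
    |expectProd r (update w a d)| ≤ c / 2 * ∑ ya, ∑ ua, |d ya ua| := by
  -- `r` may be replaced by `r - C` for any `C` not depending on `u a`; take the midrange.
  set C : (∀ i, Y i) → (∀ i, U i) → ℝ := fun y u =>
    (univ.sup' univ_nonempty (fun v => r y (update u a v))
      + univ.inf' univ_nonempty (fun v => r y (update u a v))) / 2
  have hC : ∀ y u v, C y (update u a v) = C y u := fun y u v => by simp only [C, update_idem]
  have hrC : ∀ y u, |(r - C) y u| ≤ c / 2 := fun y u => by
    have := abs_sub_midpoint_le (fun v => r y (update u a v)) (u a)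
    simp only [update_eq_self] at this
    exact this.trans (by linarith [hosc y u])
  have habs : ∀ (y : ∀ i, Y i) (u : ∀ i, U i), |∏ i, update w a d i (y i) (u i)|
      = ∏ i, update w a (fun ya ua => |d ya ua|) i (y i) (u i) := fun y u => by
    rw [prod_update_apply_eq_mul_prod_erase, prod_update_apply_eq_mul_prod_erase, abs_mul,
      abs_prod]
    exact congrArg _ <| prod_congr rfl fun i hi => abs_of_nonneg ((hw i (ne_of_mem_erase hi)).1 _ _)
  calc |expectProd r (update w a d)| = |expectProd (r - C) (update w a d)| := by
        rw [expectProd_sub_left, expectProd_update_eq_zero w hC hd, sub_zero]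
    _ ≤ ∑ y, ∑ u, |(r - C) y u| * |∏ i, update w a d i (y i) (u i)| := by
        refine (abs_sum_le_sum_abs _ _).trans (sum_le_sum fun y _ => ?_)
        refine (abs_sum_le_sum_abs _ _).trans_eq (sum_congr rfl fun u _ => abs_mul _ _)
    _ ≤ ∑ y : ∀ i, Y i, ∑ u : ∀ i, U i,
          c / 2 * ∏ i, update w a (fun ya ua => |d ya ua|) i (y i) (u i) :=
        sum_le_sum fun y _ => sum_le_sum fun u _ =>
          mul_le_mul (hrC y u) (habs y u).le (abs_nonneg _) ((abs_nonneg _).trans (hrC y u))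
    _ = c / 2 * ∏ i, ∑ yi, ∑ ui, update w a (fun ya ua => |d ya ua|) i yi ui := by
        rw [← expectProd_one]
        simp only [expectProd, one_mul, mul_sum]
    _ = c / 2 * ∑ ya, ∑ ua, |d ya ua| := by
        rw [prod_eq_single_of_mem a (mem_univ a) fun i _ hi => by
          rw [update_of_ne hi]; exact (hw i hi).2, update_self]

theorem abs_expectProd_sub_le (r : (∀ i, Y i) → (∀ i, U i) → ℝ) {p q : ∀ i, Y i → U i → ℝ}
    {c : ι → ℝ} (hp : ∀ i, IsProbWeight (p i)) (hq : ∀ i, IsProbWeight (q i))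
    (hpq : ∀ i yi, ∑ ui, p i yi ui = ∑ ui, q i yi ui)
    (hosc : ∀ i y u, univ.sup' univ_nonempty (fun v => r y (update u i v))
      - univ.inf' univ_nonempty (fun v => r y (update u i v)) ≤ c i) :
    |expectProd r p - expectProd r q| ≤ ∑ i, c i / 2 * ∑ yi, ∑ ui, |p i yi ui - q i yi ui| := by
  -- Swap the factors from `q i` to `p i` one coordinate at a time.
  suffices h : ∀ s : Finset ι, |expectProd r (s.piecewise p q) - expectProd r q|
      ≤ ∑ i ∈ s, c i / 2 * ∑ yi, ∑ ui, |p i yi ui - q i yi ui| by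
    simpa using h univ
  intro s
  induction s using Finset.induction_on with
  | empty => simp
  | insert a s ha ih =>
    have hstep : expectProd r ((insert a s).piecewise p q) - expectProd r (s.piecewise p q)
        = expectProd r (update (s.piecewise p q) a (p a - q a)) := by
      rw [expectProd_update_sub, piecewise_insert,
        update_eq_self_iff.2 (piecewise_eq_of_notMem _ _ _ ha).symm]
    have hswap := abs_expectProd_update_le r (w := s.piecewise p q) (d := p a - q a)
      (fun i _ => piecewise_cases s p q IsProbWeight (hp i) (hq i))
      (fun ya => by simp only [Pi.sub_apply, sum_sub_distrib, hpq, sub_self]) (hosc a)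
    rw [← hstep] at hswap
    calc |expectProd r ((insert a s).piecewise p q) - expectProd r q|
        ≤ |expectProd r ((insert a s).piecewise p q) - expectProd r (s.piecewise p q)|
          + |expectProd r (s.piecewise p q) - expectProd r q| := abs_sub_le _ _ _
      _ ≤ _ := by
        rw [sum_insert ha]
        exact add_le_add (by simpa only [Pi.sub_apply] using hswap) ih

end ProductWeights

section TeamModel

variable {ι : Type*} [DecidableEq ι] {Y U : ι → Type*}
  [∀ i, Fintype (Y i)] [∀ i, Fintype (U i)] [∀ i, DecidableEq (Y i)] [∀ i, DecidableEq (U i)]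

/-- Agent `i ≠ j` draws `yi` uniformly and plays `γ i yi`; agent `j`'s pair is frozen at
`(yj, uj)`. -/
noncomputable def policyWeight (γ : ∀ i, Y i → U i → ℝ) (j : ι) (yj : Y j) (uj : U j) :
    ∀ i, Y i → U i → ℝ :=
  update (fun i yi ui => γ i yi ui * (Fintype.card (Y i) : ℝ)⁻¹) j
    (fun yi ui => if yi = yj ∧ ui = uj then 1 else 0)

variable {γ ξ : ∀ i, Y i → U i → ℝ} {j : ι} {yj : Y j} {uj : U j}

theorem isProbWeight_policyWeight [∀ i, Nonempty (Y i)]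
    (hγ : ∀ i yi, γ i yi ∈ stdSimplex ℝ (U i)) (i : ι) :
    IsProbWeight (policyWeight γ j yj uj i) := by
  by_cases hi : i = j
  · subst hi
    refine ⟨fun yi ui => ?_, ?_⟩ <;> simp only [policyWeight, update_self]
    · split_ifs <;> norm_num
    · simp [ite_and, sum_ite_eq']
  · have hmass : ∀ yi, ∑ ui, γ i yi ui = 1 := fun yi => (hγ i yi).2
    simp only [IsProbWeight, policyWeight, update_of_ne hi]
    refine ⟨fun yi ui => mul_nonneg ((hγ i yi).1 ui) (by positivity), ?_⟩
    simp only [← sum_mul, hmass, one_mul, sum_const, card_univ, nsmul_eq_mul]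
    exact mul_inv_cancel₀ (Nat.cast_ne_zero.2 Fintype.card_ne_zero)

theorem sum_policyWeight_eq (hγ : ∀ i yi, γ i yi ∈ stdSimplex ℝ (U i))
    (hξ : ∀ i yi, ξ i yi ∈ stdSimplex ℝ (U i)) (i : ι) (yi : Y i) :
    ∑ ui, policyWeight γ j yj uj i yi ui = ∑ ui, policyWeight ξ j yj uj i yi ui := by
  by_cases hi : i = j
  · subst hi
    simp only [policyWeight, update_self]
  · simp only [policyWeight, update_of_ne hi, ← sum_mul, (hγ i yi).2, (hξ i yi).2]

variable [Fintype ι]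

theorem expectProd_policyWeight (r : (∀ i, Y i) → (∀ i, U i) → ℝ) :
    expectProd r (policyWeight γ j yj uj) = ∑ y : ∀ i, Y i, ∑ u : ∀ i, U i,
      if y j = yj ∧ u j = uj then
        r y u * ∏ i ∈ univ.erase j, (γ i (y i) (u i) * (Fintype.card (Y i) : ℝ)⁻¹)
      else 0 := by
  simp only [expectProd, policyWeight, prod_update_apply_eq_mul_prod_erase]
  exact sum_congr rfl fun y _ => sum_congr rfl fun u _ => by split_ifs <;> ring

variable [∀ i, Nonempty (Y i)] [∀ i, Nonempty (U i)]

theorem abs_expectProd_policyWeight_sub_le (r : (∀ i, Y i) → (∀ i, U i) → ℝ) {c : ι → ℝ}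
    (hγ : ∀ i yi, γ i yi ∈ stdSimplex ℝ (U i)) (hξ : ∀ i yi, ξ i yi ∈ stdSimplex ℝ (U i))
    (hosc : ∀ i y u, univ.sup' univ_nonempty (fun v => r y (update u i v))
      - univ.inf' univ_nonempty (fun v => r y (update u i v)) ≤ c i) :
    |expectProd r (policyWeight γ j yj uj) - expectProd r (policyWeight ξ j yj uj)|
      ≤ ∑ i ∈ univ.erase j, c i / 2 *
        ∑ yi, (Fintype.card (Y i) : ℝ)⁻¹ * ∑ v, |γ i yi v - ξ i yi v| := by
  refine (abs_expectProd_sub_le r (isProbWeight_policyWeight hγ) (isProbWeight_policyWeight hξ)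
    (sum_policyWeight_eq hγ hξ) hosc).trans_eq ?_
  rw [← add_sum_erase univ _ (mem_univ j)]
  simp only [policyWeight, update_self, sub_self, abs_zero, sum_const_zero, mul_zero, zero_add]
  refine sum_congr rfl fun i hi => congrArg _ <| sum_congr rfl fun yi _ => ?_
  simp only [update_of_ne (ne_of_mem_erase hi), ← sub_mul, abs_mul, ← sum_mul,
    abs_of_pos (inv_pos.2 (Nat.cast_pos.2 Fintype.card_pos) : (0 : ℝ) < _), mul_comm]

end TeamModel

/-- in the regularized team model (finite observation spaces with uniform
distributions, finite action spaces, `ρ_j`-strongly convex regularizers `Ω_j` w.r.t.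
ℓ¹), the best response maps `B_j` (pointwise argmax of
`δ ↦ ⟨G_j(γ^{-j},y_j,·), δ⟩ - Ω_j(δ)` over the simplex) satisfy
`‖B_j(γ^{-j}) - B_j(ξ^{-j})‖_{L¹} ≤ (1/ρ_j) ∑_{i≠j} (λ_i(r)/2) ‖γ_i - ξ_i‖_{L¹}`. -/
theorem stmt_14 {N : ℕ}
    {Y U : Fin N → Type*} [∀ i, Fintype (Y i)] [∀ i, Nonempty (Y i)]
    [∀ i, Fintype (U i)] [∀ i, Nonempty (U i)]
    [∀ i, DecidableEq (Y i)] [∀ i, DecidableEq (U i)]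
    (r : (∀ i, Y i) → (∀ i, U i) → ℝ)
    (lam : Fin N → ℝ)
    (hlam : ∀ i, lam i =
      Finset.univ.sup' Finset.univ_nonempty
        (fun p : (∀ k, Y k) × (∀ k, U k) =>
          Finset.univ.sup' Finset.univ_nonempty
              (fun v : U i => r p.1 (Function.update p.2 i v))
            - Finset.univ.inf' Finset.univ_nonempty
              (fun v : U i => r p.1 (Function.update p.2 i v))))
    (G : (j : Fin N) → (∀ i, Y i → U i → ℝ) → Y j → U j → ℝ)
    (hG : ∀ j γ yj uj, G j γ yj uj =
      ∑ y : ∀ i, Y i, ∑ u : ∀ i, U i,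
        if y j = yj ∧ u j = uj then
          r y u * ∏ i ∈ Finset.univ.erase j,
            (γ i (y i) (u i) * (Fintype.card (Y i) : ℝ)⁻¹)
        else 0)
    (Ω : (j : Fin N) → (U j → ℝ) → ℝ) (ρ : Fin N → ℝ) (hρ : ∀ j, 0 < ρ j)
    -- `Ω j` is `ρ j`-strongly convex on the simplex with respect to the ℓ¹-norm
    (hΩ : ∀ j (δ ξ : U j → ℝ),
      ((∀ v, 0 ≤ δ v) ∧ ∑ v, δ v = 1) → ((∀ v, 0 ≤ ξ v) ∧ ∑ v, ξ v = 1) →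
      ∀ t : ℝ, 0 ≤ t → t ≤ 1 →
        Ω j (fun v => t * δ v + (1 - t) * ξ v) ≤
          t * Ω j δ + (1 - t) * Ω j ξ
            - ρ j * (t * (1 - t) / 2) * (∑ v, |δ v - ξ v|) ^ 2)
    (B : (j : Fin N) → (∀ i, Y i → U i → ℝ) → Y j → U j → ℝ)
    -- `B j γ yj` lies in the simplex and maximizes `δ ↦ ⟨G_j, δ⟩ - Ω_j(δ)` over it
    (hB : ∀ j γ yj, ((∀ v, 0 ≤ B j γ yj v) ∧ ∑ v, B j γ yj v = 1) ∧
      ∀ δ : U j → ℝ, (∀ v, 0 ≤ δ v) → ∑ v, δ v = 1 →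
        ∑ uj, G j γ yj uj * δ uj - Ω j δ ≤
          ∑ uj, G j γ yj uj * B j γ yj uj - Ω j (B j γ yj))
    (γ ξ : ∀ i, Y i → U i → ℝ)
    (hγ : ∀ i yi, (∀ v, 0 ≤ γ i yi v) ∧ ∑ v, γ i yi v = 1)
    (hξ : ∀ i yi, (∀ v, 0 ≤ ξ i yi v) ∧ ∑ v, ξ i yi v = 1)
    (j : Fin N) :
    ∑ yj : Y j, (Fintype.card (Y j) : ℝ)⁻¹ * ∑ uj, |B j γ yj uj - B j ξ yj uj| ≤
      (1 / ρ j) * ∑ i ∈ Finset.univ.erase j, (lam i / 2) *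
        ∑ yi : Y i, (Fintype.card (Y i) : ℝ)⁻¹ * ∑ v, |γ i yi v - ξ i yi v| := by
  have hosc : ∀ i y u, univ.sup' univ_nonempty (fun v => r y (update u i v))
      - univ.inf' univ_nonempty (fun v => r y (update u i v)) ≤ lam i := fun i y u => by
    rw [hlam i]
    exact le_sup' (fun p : (∀ k, Y k) × (∀ k, U k) =>
      univ.sup' univ_nonempty (fun v => r p.1 (update p.2 i v))
        - univ.inf' univ_nonempty (fun v => r p.1 (update p.2 i v))) (mem_univ (y, u))
  set K := ∑ i ∈ univ.erase j, (lam i / 2) *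
    ∑ yi : Y i, (Fintype.card (Y i) : ℝ)⁻¹ * ∑ v, |γ i yi v - ξ i yi v|
  have hG_lip : ∀ yj uj, |G j γ yj uj - G j ξ yj uj| ≤ K := fun yj uj => by
    simpa only [hG, expectProd_policyWeight] using
      abs_expectProd_policyWeight_sub_le (yj := yj) (uj := uj) r hγ hξ hosc
  have hB_lip : ∀ yj, ρ j * ∑ uj, |B j γ yj uj - B j ξ yj uj| ≤ K := fun yj =>
    StrongConvexOnStdSimplexL1.mul_dist_le_of_isMaxOn (hΩ j) (hB j γ yj).1 (hB j ξ yj).1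
      (isMaxOn_iff.2 fun δ hδ => (hB j γ yj).2 δ hδ.1 hδ.2)
      (isMaxOn_iff.2 fun δ hδ => (hB j ξ yj).2 δ hδ.1 hδ.2) (hG_lip yj)
  calc ∑ yj : Y j, (Fintype.card (Y j) : ℝ)⁻¹ * ∑ uj, |B j γ yj uj - B j ξ yj uj|
      ≤ ∑ yj : Y j, (Fintype.card (Y j) : ℝ)⁻¹ * (1 / ρ j * K) :=
        sum_le_sum fun yj _ => mul_le_mul_of_nonneg_left
          (by rw [one_div_mul_eq_div, le_div_iff₀' (hρ j)]; exact hB_lip yj) (by positivity)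
    _ = 1 / ρ j * K := by
        rw [← sum_mul, sum_const, card_univ, nsmul_eq_mul,
          mul_inv_cancel₀ (Nat.cast_ne_zero.2 Fintype.card_ne_zero), one_mul]
end

section
/- Let P be a nonnegative N×N matrix, v ∈ ℝ^N strictly positive, and 0 < w < 1 with P·v ≤ w·v entrywise. Let X be a product of N complete metric spaces and B : X → X a P-contraction with fixed point γ*. Define Γ^k = {γ : d(γ, γ*) ≤ α w^k v componentwise} for a constant α > 0. Then: (a) any sequence γ^{(k)} with γ^{(k)} ∈ Γ^k converges to γ*; (b) if γ ∈ Γ^k then B(γ) ∈ Γ^{k+1} ⊆ Γ^k; and (c) if γ(1),…,γ(N) ∈ Γ^k then the profile whose j-th component is the j-th component of B(γ(j)) lies in Γ^{k+1}. -/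
open Filter

/-- nested-set properties for the asynchronous best-response algorithm.
Let `B` be a `P`-contraction on a product of `N` complete metric spaces with fixed point
`γ*`, where `P ≥ 0`, `v > 0`, `0 < w < 1` and `P·v ≤ w·v` entrywise, and let
`Γ^k = {γ : d(γ, γ*) ≤ α w^k v componentwise}` with `α > 0`. Then (a) any sequence with
`γ^{(k)} ∈ Γ^k` converges to `γ*`; (b) `γ ∈ Γ^k` implies `B(γ) ∈ Γ^{k+1} ⊆ Γ^k`; and
(c) if `γ(1),…,γ(N) ∈ Γ^k` then the profile whose `j`-th component is the `j`-th
component of `B(γ(j))` lies in `Γ^{k+1}`. -/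
theorem stmt_19 {N : ℕ} {X : Fin N → Type*} [∀ i, MetricSpace (X i)]
    [∀ i, CompleteSpace (X i)]
    (P : Matrix (Fin N) (Fin N) ℝ) (hP : ∀ i j, 0 ≤ P i j)
    (v : Fin N → ℝ) (hv : ∀ i, 0 < v i)
    (w : ℝ) (hw0 : 0 < w) (hw1 : w < 1)
    (hPv : ∀ j, P.mulVec v j ≤ w * v j)
    (B : (∀ i, X i) → ∀ i, X i)
    (hB : ∀ γ ξ : ∀ i, X i, ∀ j,
      dist (B γ j) (B ξ j) ≤ ∑ i, P j i * dist (γ i) (ξ i))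
    (γstar : ∀ i, X i) (hfix : B γstar = γstar)
    (α : ℝ) (hα : 0 < α)
    (Γ : ℕ → Set (∀ i, X i))
    (hΓ : ∀ k, Γ k = {γ | ∀ j, dist (γ j) (γstar j) ≤ α * w ^ k * v j}) :
    (∀ γseq : ℕ → ∀ i, X i, (∀ k, γseq k ∈ Γ k) →
        Tendsto γseq atTop (nhds γstar)) ∧
    (∀ k, ∀ γ ∈ Γ k, B γ ∈ Γ (k + 1)) ∧
    (∀ k, Γ (k + 1) ⊆ Γ k) ∧
    (∀ k (γs : Fin N → ∀ i, X i), (∀ j, γs j ∈ Γ k) →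
        (fun j => B (γs j) j) ∈ Γ (k + 1)) := by

  have key : ∀ k (γs : Fin N → ∀ i, X i), (∀ j, γs j ∈ Γ k) →
      (fun j => B (γs j) j) ∈ Γ (k + 1) := by
    intro k γs hγs
    simp only [hΓ, Set.mem_setOf_eq] at *
    intro j
    calc dist (B (γs j) j) (γstar j) = dist (B (γs j) j) (B γstar j) := by rw [hfix]
      _ ≤ ∑ i, P j i * dist (γs j i) (γstar i) := hB _ _ j
      _ ≤ ∑ i, P j i * (α * w ^ k * v i) := by
          apply Finset.sum_le_sum
          intro i _
          exact mul_le_mul_of_nonneg_left ((hγs j) i) (hP j i)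
      _ = α * w ^ k * P.mulVec v j := by
          rw [Matrix.mulVec, dotProduct, Finset.mul_sum]
          congr 1; funext i; ring
      _ ≤ α * w ^ k * (w * v j) := by
          apply mul_le_mul_of_nonneg_left (hPv j)
          positivity
      _ = α * w ^ (k + 1) * v j := by ring
  refine ⟨?_, fun k γ hγ => ?_, fun k γ hγ => ?_, key⟩
  · intro γseq hseq
    rw [tendsto_pi_nhds]
    intro j
    rw [tendsto_iff_dist_tendsto_zero]
    have hb : Tendsto (fun k : ℕ => α * w ^ k * v j) atTop (nhds 0) := by
      have := (((tendsto_pow_atTop_nhds_zero_of_lt_one hw0.le hw1).const_mul α).mul_const (v j))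
      simpa using this
    exact squeeze_zero (fun k => dist_nonneg)
      (fun k => by have := hseq k; rw [hΓ] at this; exact this j) hb
  · exact key k (fun _ => γ) (fun _ => hγ) 
  · rw [hΓ] at *
    intro j
    refine le_trans (hγ j) ?_
    have : w ^ (k+1) ≤ w ^ k := pow_le_pow_of_le_one hw0.le hw1.le (by omega)
    exact mul_le_mul_of_nonneg_right (mul_le_mul_of_nonneg_left this hα.le) (hv j).le
end
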